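/- Let G be a finite simple cubic graph with a proper 3-edge-colouring using three colours, and let {g1, g2} be an edge cut of size 2 (determined by a set S with both S and its complement nonempty) in which both edges g1 and g2 receive the same colour x. Then for every colour y different from x, the edges g1 and g2 lie in the same connected component of the spanning subgraph of G formed by the edges coloured x or y (that is, the x-y bigon containing g1 also contains g2). -/

import Mathlib

/-- A proper edge colouring of a graph: two distinct edges sharing an endpoint
receive different colours. -/
def ProperEdgeColouring {V : Type*} {α : Type*} (G : SimpleGraph V) (c : Sym2 V → α) : Prop :=
  ∀ e₁ ∈ G.edgeSet, ∀ e₂ ∈ G.edgeSet, e₁ ≠ e₂ → (∃ v, v ∈ e₁ ∧ v ∈ e₂) → c e₁ ≠ c e₂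

/-- A cubic graph: every vertex has degree 3. -/
def IsCubic {V : Type*} (G : SimpleGraph V) : Prop :=
  ∀ v : V, (G.neighborSet v).ncard = 3

/-- The edge cut determined by a vertex set `S`: the set of edges of `G`
with exactly one endpoint in `S`. -/
def edgeCut {V : Type*} (G : SimpleGraph V) (S : Set V) : Set (Sym2 V) :=
  {e | ∃ u v, e = s(u, v) ∧ G.Adj u v ∧ u ∈ S ∧ v ∉ S}

/-- The spanning subgraph of `G` formed by the edges coloured `x` or `y`. -/
def twoColourSubgraph {V : Type*} {α : Type*} (G : SimpleGraph V) (c : Sym2 V → α)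
    (x y : α) : SimpleGraph V where
  Adj u v := G.Adj u v ∧ (c s(u, v) = x ∨ c s(u, v) = y)
  symm := by
    constructor
    intro u v h
    refine ⟨h.1.symm, ?_⟩
    rw [Sym2.eq_swap]
    exact h.2
  loopless := ⟨fun v h => G.loopless.1 v h.1⟩

/-!
The edges coloured `x` or `y` span a subgraph `H` in which every vertex has degree 2: a proper
colouring of a cubic graph with three colours uses each colour exactly once at each vertex.
Write `g1 = ab` and `g2 = pq` with `a, p ∈ S`. If `p` were not reachable from `a` in `H`, the
vertices of `S` reachable from `a` would be left by exactly one edge of `H`, namely `g1`; but in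
a graph all of whose degrees are even, every edge cut has even size.
-/

open Finset SimpleGraph

section Colouring

variable {V α : Type*} {G : SimpleGraph V} {c : Sym2 V → α}

theorem ProperEdgeColouring.injOn_neighborSet (hc : ProperEdgeColouring G c) (v : V) :
    Set.InjOn (fun w => c s(v, w)) (G.neighborSet v) := by
  intro w₁ h₁ w₂ h₂ hcol
  by_contra hne
  exact hc _ h₁ _ h₂ (fun h => hne (Sym2.congr_right.mp h))
    ⟨v, Sym2.mem_mk_left _ _, Sym2.mem_mk_left _ _⟩ hcol

theorem ProperEdgeColouring.image_neighborSet_eq_univ [Finite α] (hc : ProperEdgeColouring G c)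
    {v : V} (hv : (G.neighborSet v).ncard = Nat.card α) :
    (fun w => c s(v, w)) '' G.neighborSet v = Set.univ :=
  Set.eq_of_subset_of_ncard_le (Set.subset_univ _) <| by
    rw [Set.ncard_univ, (hc.injOn_neighborSet v).ncard_image, hv]

theorem neighborSet_twoColourSubgraph (x y : α) (v : V) :
    (twoColourSubgraph G c x y).neighborSet v
      = G.neighborSet v ∩ (fun w => c s(v, w)) ⁻¹' {x, y} :=
  rfl

theorem ncard_neighborSet_twoColourSubgraph [Finite α] (hc : ProperEdgeColouring G c)
    {v : V} (hv : (G.neighborSet v).ncard = Nat.card α) {x y : α} (hxy : x ≠ y) :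
    ((twoColourSubgraph G c x y).neighborSet v).ncard = 2 := by
  rw [neighborSet_twoColourSubgraph, ← ((hc.injOn_neighborSet v).mono
    Set.inter_subset_left).ncard_image, Set.image_inter_preimage,
    hc.image_neighborSet_eq_univ hv, Set.univ_inter, Set.ncard_pair hxy]

end Colouring

section Parity

variable {V : Type*} (H : SimpleGraph V)

theorem ncard_edgeCut_eq_sum [Fintype V] [DecidableEq V] [DecidableRel H.Adj] (T : Finset V) :
    (edgeCut H T).ncard = ∑ v ∈ T, #(H.neighborFinset v \ T) := by
  set D := T.sigma fun v => H.neighborFinset v \ T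
  have hD : edgeCut H T = (fun d : Σ _ : V, V => s(d.1, d.2)) '' D := by
    ext e
    simp only [edgeCut, Set.mem_image, mem_coe, D, mem_sigma, mem_sdiff,
      mem_neighborFinset]
    constructor
    · rintro ⟨u, v, rfl, huv, hu, hv⟩
      exact ⟨⟨u, v⟩, ⟨hu, huv, hv⟩, rfl⟩
    · rintro ⟨⟨u, v⟩, ⟨hu, huv, hv⟩, rfl⟩
      exact ⟨u, v, rfl, huv, hu, hv⟩
  have hinj : Set.InjOn (fun d : Σ _ : V, V => s(d.1, d.2)) D := by
    rintro ⟨u, v⟩ huv ⟨u', v'⟩ huv' h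
    simp only [D, coe_sigma, Set.mem_sigma_iff, mem_coe, mem_sdiff] at huv huv'
    rcases Sym2.eq_iff.mp h with ⟨rfl, rfl⟩ | ⟨rfl, -⟩
    · rfl
    · exact absurd huv.1 huv'.2.2
  rw [hD, hinj.ncard_image, Set.ncard_coe_finset, card_sigma]

theorem even_ncard_edgeCut [Finite V] (hH : ∀ v, Even (H.neighborSet v).ncard) (T : Set V) :
    Even (edgeCut H T).ncard := by
  classical
  have := Fintype.ofFinite V
  rw [← Set.coe_toFinset T, ncard_edgeCut_eq_sum]
  set T' := T.toFinset
  -- `∑ v ∈ T', H.degree v` counts the edges inside `T'` twice and those of the cut once.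
  have hinside : ∑ v ∈ T', #(H.neighborFinset v ∩ T') = 2 * #(H.induce T').edgeFinset := by
    rw [← sum_degrees_eq_twice_card_edges, ← Finset.sum_coe_sort T']
    refine Finset.sum_congr rfl fun v _ => ?_
    have := congrArg card (map_neighborFinset_induce (G := H) v)
    rw [card_map, card_neighborFinset_eq_degree, toFinset_coe] at this
    convert this.symm
  have htotal : ∑ v ∈ T', #(H.neighborFinset v ∩ T') + ∑ v ∈ T', #(H.neighborFinset v \ T')
      = ∑ v ∈ T', H.degree v := by
    rw [← sum_add_distrib]
    simp only [card_inter_add_card_sdiff, card_neighborFinset_eq_degree]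
  have hdeg : Even (∑ v ∈ T', H.degree v) := Finset.even_sum _ fun v _ => by
    rw [← card_neighborFinset_eq_degree, neighborFinset_def, ← Set.ncard_eq_toFinset_card']
    exact hH v
  rw [← htotal, hinside] at hdeg
  exact (Nat.even_add.mp hdeg).mp (even_two_mul _)

end Parity

theorem edgeCut_setOf_reachable_eq_singleton {V : Type*} {G H : SimpleGraph V} (hHG : H ≤ G)
    {S : Set V} {a b p q : V} (hcut : edgeCut G S = {s(a, b), s(p, q)})
    (ha : a ∈ S) (hb : b ∉ S) (hab : H.Adj a b) (hp : p ∈ S) (hq : q ∉ S)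
    (hap : ¬ H.Reachable a p) :
    edgeCut H {v | v ∈ S ∧ H.Reachable a v} = {s(a, b)} := by
  ext e
  constructor
  · rintro ⟨v, w, rfl, hvw, ⟨hv, hav⟩, hw⟩
    have hwS : w ∉ S := fun hwS => hw ⟨hwS, hav.trans hvw.reachable⟩
    have hG : s(v, w) ∈ edgeCut G S := ⟨v, w, rfl, hHG hvw, hv, hwS⟩
    rw [hcut] at hG
    rcases hG with hG | hG
    · exact hG
    · rcases Sym2.eq_iff.mp hG with ⟨rfl, -⟩ | ⟨rfl, -⟩
      · exact absurd hav hap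
      · exact absurd hv hq
  · rintro rfl
    exact ⟨a, b, rfl, hab, ⟨ha, .refl a⟩, fun hb' => hb hb'.1⟩

theorem mono_two_edge_cut_same_bigon_general {V : Type*} [Fintype V]
    (G : SimpleGraph V) (c : Sym2 V → Fin 3)
    (hcubic : IsCubic G) (hproper : ProperEdgeColouring G c)
    (S : Set V)
    (g1 g2 : Sym2 V) (hcut : edgeCut G S = {g1, g2})
    (x : Fin 3) (hg1 : c g1 = x) (hg2 : c g2 = x)
    (y : Fin 3) (hyx : y ≠ x) :
    g1 ∈ (twoColourSubgraph G c x y).edgeSet ∧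
    g2 ∈ (twoColourSubgraph G c x y).edgeSet ∧
    ∃ u v, u ∈ g1 ∧ v ∈ g2 ∧ (twoColourSubgraph G c x y).Reachable u v := by
  set H := twoColourSubgraph G c x y
  obtain ⟨a, b, rfl, hab, ha, hb⟩ : g1 ∈ edgeCut G S := hcut ▸ Set.mem_insert g1 {g2}
  obtain ⟨p, q, rfl, hpq, hp, hq⟩ : g2 ∈ edgeCut G S := hcut ▸ Set.mem_insert_of_mem _ rfl
  have hHab : H.Adj a b := ⟨hab, Or.inl hg1⟩
  refine ⟨hHab, ⟨hpq, Or.inl hg2⟩, a, p, Sym2.mem_mk_left a b, Sym2.mem_mk_left p q, ?_⟩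
  by_contra hap
  have hdeg (v : V) : Even (H.neighborSet v).ncard := by
    rw [ncard_neighborSet_twoColourSubgraph hproper (by simpa using hcubic v) hyx.symm]
    exact even_two
  have hcutEven := even_ncard_edgeCut H hdeg {v | v ∈ S ∧ H.Reachable a v}
  have hHG : H ≤ G := fun _ _ h => h.1
  rw [edgeCut_setOf_reachable_eq_singleton hHG hcut ha hb hHab hp hq hap,
    Set.ncard_singleton] at hcutEven
  exact Nat.not_even_one hcutEven

/-- In a cubic graph with a proper 3-edge-colouring, if a 2-edge cut
`{g1, g2}` is monochromatic in colour `x`, then for each colour `y ≠ x` the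
edges `g1` and `g2` lie in the same connected component of the spanning
subgraph formed by the edges coloured `x` or `y` (the `x`-`y` bigon containing
`g1` also contains `g2`). -/
theorem mono_two_edge_cut_same_bigon {V : Type*} [Fintype V]
    (G : SimpleGraph V) (c : Sym2 V → Fin 3)
    (hcubic : IsCubic G) (hproper : ProperEdgeColouring G c)
    (S : Set V) (hS : S.Nonempty) (hSc : Sᶜ.Nonempty)
    (g1 g2 : Sym2 V) (hne : g1 ≠ g2) (hcut : edgeCut G S = {g1, g2})
    (x : Fin 3) (hg1 : c g1 = x) (hg2 : c g2 = x)
    (y : Fin 3) (hyx : y ≠ x) :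
    g1 ∈ (twoColourSubgraph G c x y).edgeSet ∧
    g2 ∈ (twoColourSubgraph G c x y).edgeSet ∧
    ∃ u v, u ∈ g1 ∧ v ∈ g2 ∧ (twoColourSubgraph G c x y).Reachable u v :=
  mono_two_edge_cut_same_bigon_general G c hcubic hproper S g1 g2 hcut x hg1 hg2 y hyx
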